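/- arXiv:1006.4658 — 2 statements merged into one kernel-verified Lean document; each statement's English description precedes it below -/
import Mathlib

section
/- Let A ∈ 𝔅(n) be a Bott matrix with A_ℓ = A_m for distinct ℓ, m, and let B = Φ^{ℓ,m}(A). Let a_1,…,a_n and b_1,…,b_n be the involutions of T^n associated with A and B respectively, and let f̃ : T^n → T^n be the map (z_1,…,z_n) ↦ (z_1,…,z_{ℓ−1}, z_ℓ z_m, z_{ℓ+1},…,z_n). Then for every z ∈ T^n, f̃(b_i(z)) = a_i(f̃(z)) for all i ≠ m, and f̃(b_m(z)) = (a_ℓ ∘ a_m)(f̃(z)). -/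
/-! Both identities are checked coordinatewise. The point is that `z ↦ z(a)` is multiplicative,
so on the `ℓ`-th coordinate `z_ℓ z_m` the involution `a_i` acts as `b_i` does on both factors
once the columns `A_ℓ`, `A_m` agree; the zero diagonal of a Bott matrix kills the remaining
entries `A_{ℓℓ}`, `A_{ℓm}`, `A_{mℓ}`, `A_{mm}`, and `z(a + b) = (z(b))(a)` matches the new row
`B^m = A^ℓ + A^m` with `a_ℓ ∘ a_m`. -/

open Matrix

/-- A Bott matrix: conjugate by a permutation matrix to a strictly upper
triangular binary matrix. -/
def IsBott {n : ℕ} (A : Matrix (Fin n) (Fin n) (ZMod 2)) : Prop :=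
  ∃ (σ : Equiv.Perm (Fin n)) (B : Matrix (Fin n) (Fin n) (ZMod 2)),
    (∀ i j : Fin n, j ≤ i → B i j = 0) ∧
    A = σ.permMatrix (ZMod 2) * B * (σ⁻¹).permMatrix (ZMod 2)

/-- (Op3) `Φ^{ℓ,m}(A)`: add the `ℓ`-th row to the `m`-th row. -/
def Phi3 {n : ℕ} (l m : Fin n) (A : Matrix (Fin n) (Fin n) (ZMod 2)) :
    Matrix (Fin n) (Fin n) (ZMod 2) :=
  fun i j => if i = m then A l j + A m j else A i j

/-- `z(a)`: `z` if `a = 0` and the complex conjugate `z̄` if `a = 1`. -/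
noncomputable def conjPow (a : ZMod 2) (z : ℂ) : ℂ :=
  if a = 0 then z else (starRingEnd ℂ) z

/-- The involution `a_i` of `T^n ⊆ ℂ^n` associated with a binary matrix `A`. -/
noncomputable def aMap {n : ℕ} (A : Matrix (Fin n) (Fin n) (ZMod 2)) (i : Fin n)
    (z : Fin n → ℂ) : Fin n → ℂ :=
  fun j => if j = i then -z i else conjPow (A i j) (z j)

/-- The affine automorphism `f̃ = f̃^{ℓ,m}` of `T^n`:
`(z_1,…,z_n) ↦ (z_1,…,z_{ℓ−1}, z_ℓ z_m, z_{ℓ+1},…,z_n)`. -/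
noncomputable def ftildeLM {n : ℕ} (l m : Fin n) (z : Fin n → ℂ) : Fin n → ℂ :=
  fun j => if j = l then z l * z m else z j

lemma conjPow_zero (z : ℂ) : conjPow 0 z = z := if_pos rfl

lemma conjPow_add (a b : ZMod 2) (z : ℂ) :
    conjPow (a + b) z = conjPow a (conjPow b z) := by
  have h01 : ∀ x : ZMod 2, x = 0 ∨ x = 1 := by decide
  rcases h01 a with rfl | rfl <;> rcases h01 b with rfl | rfl <;>
    simp [conjPow, show (1 + 1 : ZMod 2) = 0 from rfl]

lemma conjPow_mul (a : ZMod 2) (x y : ℂ) :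
    conjPow a (x * y) = conjPow a x * conjPow a y := by
  unfold conjPow
  split_ifs <;> simp

lemma Equiv.Perm.permMatrix_mul_mul_permMatrix_inv_apply {ι R : Type*} [Fintype ι]
    [DecidableEq ι] [NonAssocSemiring R] (σ : Equiv.Perm ι) (B : Matrix ι ι R) (i j : ι) :
    (σ.permMatrix R * B * σ⁻¹.permMatrix R) i j = B (σ i) (σ j) := by
  rw [Equiv.Perm.permMatrix, Equiv.Perm.permMatrix, PEquiv.toMatrix_toPEquiv_mul,
    PEquiv.mul_toMatrix_toPEquiv]
  simp [Equiv.Perm.inv_def]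

lemma IsBott.diag_eq_zero {n : ℕ} {A : Matrix (Fin n) (Fin n) (ZMod 2)} (hA : IsBott A)
    (i : Fin n) : A i i = 0 := by
  obtain ⟨σ, B, hB, rfl⟩ := hA
  rw [Equiv.Perm.permMatrix_mul_mul_permMatrix_inv_apply]
  exact hB _ _ le_rfl

section Equivariance

variable {n : ℕ} {A : Matrix (Fin n) (Fin n) (ZMod 2)} {l m : Fin n}

lemma Phi3_apply_self (l m : Fin n) (A : Matrix (Fin n) (Fin n) (ZMod 2)) (j : Fin n) :
    Phi3 l m A m j = A l j + A m j := if_pos rfl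

lemma Phi3_apply_of_ne {i : Fin n} (hi : i ≠ m) (j : Fin n) : Phi3 l m A i j = A i j :=
  if_neg hi

lemma aMap_apply_self (A : Matrix (Fin n) (Fin n) (ZMod 2)) (i : Fin n) (z : Fin n → ℂ) :
    aMap A i z i = -z i := if_pos rfl

lemma aMap_apply_of_ne {i j : Fin n} (hj : j ≠ i) (z : Fin n → ℂ) :
    aMap A i z j = conjPow (A i j) (z j) := if_neg hj

lemma ftildeLM_apply_left (l m : Fin n) (z : Fin n → ℂ) : ftildeLM l m z l = z l * z m :=
  if_pos rfl

lemma ftildeLM_apply_of_ne {j : Fin n} (hj : j ≠ l) (z : Fin n → ℂ) :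
    ftildeLM l m z j = z j := if_neg hj

lemma ftildeLM_aMap_Phi3_of_ne (hlm : l ≠ m) (hcol : ∀ i, A i l = A i m) (hll : A l l = 0)
    {i : Fin n} (him : i ≠ m) (z : Fin n → ℂ) :
    ftildeLM l m (aMap (Phi3 l m A) i z) = aMap A i (ftildeLM l m z) := by
  funext j
  rcases eq_or_ne j l with rfl | hjl
  · rcases eq_or_ne i j with rfl | hij
    · rw [ftildeLM_apply_left, aMap_apply_self, aMap_apply_self, aMap_apply_of_ne hlm.symm,
        Phi3_apply_of_ne him, ← hcol, hll, conjPow_zero, ftildeLM_apply_left, neg_mul]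
    · rw [ftildeLM_apply_left, aMap_apply_of_ne hij.symm, aMap_apply_of_ne (Ne.symm him),
        aMap_apply_of_ne hij.symm, Phi3_apply_of_ne him, Phi3_apply_of_ne him, ← hcol,
        ftildeLM_apply_left, conjPow_mul]
  · rw [ftildeLM_apply_of_ne hjl]
    rcases eq_or_ne j i with rfl | hji
    · rw [aMap_apply_self, aMap_apply_self, ftildeLM_apply_of_ne hjl]
    · rw [aMap_apply_of_ne hji, aMap_apply_of_ne hji, Phi3_apply_of_ne him,
        ftildeLM_apply_of_ne hjl]

lemma ftildeLM_aMap_Phi3_self (hlm : l ≠ m) (hcol : ∀ i, A i l = A i m) (hll : A l l = 0)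
    (hmm : A m m = 0) (z : Fin n → ℂ) :
    ftildeLM l m (aMap (Phi3 l m A) m z) = aMap A l (aMap A m (ftildeLM l m z)) := by
  funext j
  rcases eq_or_ne j l with rfl | hjl
  · rw [ftildeLM_apply_left, aMap_apply_self, aMap_apply_self, aMap_apply_of_ne hlm,
      aMap_apply_of_ne hlm, Phi3_apply_self, hll, hcol m, hmm, add_zero, conjPow_zero,
      conjPow_zero, ftildeLM_apply_left, mul_neg]
  · rw [ftildeLM_apply_of_ne hjl, aMap_apply_of_ne hjl]
    rcases eq_or_ne j m with rfl | hjm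
    · rw [aMap_apply_self, aMap_apply_self, ← hcol, hll, conjPow_zero, ftildeLM_apply_of_ne hjl]
    · rw [aMap_apply_of_ne hjm, aMap_apply_of_ne hjm, Phi3_apply_self, conjPow_add,
        ftildeLM_apply_of_ne hjl]

end Equivariance

/-- Equivariance of `f̃^{ℓ,m}` for the operation (Op3): with `B = Φ^{ℓ,m}(A)`
(for `ℓ ≠ m` and equal columns `A_ℓ = A_m`) and the involutions `b_i` of `B`,
one has `f̃(b_i(z)) = a_i(f̃(z))` for `i ≠ m` and
`f̃(b_m(z)) = (a_ℓ ∘ a_m)(f̃(z))`, for all `z ∈ T^n`. -/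
theorem ftildeLM_equivariant {n : ℕ} (A : Matrix (Fin n) (Fin n) (ZMod 2))
    (hA : IsBott A) (l m : Fin n) (hlm : l ≠ m) (hcol : ∀ i, A i l = A i m) :
    ∀ z : Fin n → ℂ, (∀ j, ‖z j‖ = 1) →
      (∀ i : Fin n, i ≠ m →
        ftildeLM l m (aMap (Phi3 l m A) i z) = aMap A i (ftildeLM l m z)) ∧
      ftildeLM l m (aMap (Phi3 l m A) m z) =
        aMap A l (aMap A m (ftildeLM l m z)) := by
  intro z _
  have hll := hA.diag_eq_zero l
  exact ⟨fun i him => ftildeLM_aMap_Phi3_of_ne hlm hcol hll him z,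
    ftildeLM_aMap_Phi3_self hlm hcol hll (hA.diag_eq_zero m) z⟩
end

section
/- Let D and H be Bott equivalent acyclic digraphs on n vertices. Then: (i) for every subset J ⊆ {0,1,…,n−1}, ρ_D(⋃_{j∈J} L_j(D)) = ρ_H(⋃_{j∈J} L_j(H)); (ii) for every j ∈ {0,1,…,n−2}, the 𝔽₂-rank of A_D[L_j(D), L_{j+1}(D)] equals the 𝔽₂-rank of A_H[L_j(H), L_{j+1}(H)]. -/
/-- Local complementation at `v`: arc set `A(D) Δ (N⁻_D(v) × N⁺_D(v))`. -/
def localComp {V : Type*} (R : V → V → Prop) (v : V) : V → V → Prop :=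
  fun x y => Xor' (R x y) (R x v ∧ R v y)

/-- The slide on `uv`: arc set `A(D) Δ {(v,w) : w ∈ N⁺_D(u)}`. -/
def slideRel {V : Type*} (R : V → V → Prop) (u v : V) : V → V → Prop :=
  fun x y => Xor' (R x y) (x = v ∧ R u y)

/-- A digraph is acyclic if it has no directed cycle. -/
def AcyclicRel {V : Type*} (R : V → V → Prop) : Prop :=
  ∀ v : V, ¬ Relation.TransGen R v v

/-- One graph operation: a local complementation or a legal slide. -/
inductive GStep {V : Type*} : (V → V → Prop) → (V → V → Prop) → Prop
  | lc (R : V → V → Prop) (v : V) : GStep R (localComp R v)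
  | sl (R : V → V → Prop) (u v : V) (h : u ≠ v) (hN : ∀ w, R w u ↔ R w v) :
      GStep R (slideRel R u v)

/-- Bott equivalence of digraphs. -/
def BottEquivD {V : Type*} {W : Type*} (R : V → V → Prop) (S : W → W → Prop) : Prop :=
  ∃ R' : V → V → Prop, Relation.ReflTransGen GStep R R' ∧
    ∃ e : V ≃ W, ∀ a b : V, R' a b ↔ S (e a) (e b)

/-- There is a directed path with exactly `k` arcs ending at `v`. -/
def EndPath {V : Type*} (R : V → V → Prop) (k : ℕ) (v : V) : Prop :=
  ∃ f : Fin (k + 1) → V, Function.Injective f ∧ f (Fin.last k) = v ∧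
    ∀ i : Fin k, R (f i.castSucc) (f i.succ)

/-- The `k`-th level set `L_k(D)`. -/
def levelSet {V : Type*} (R : V → V → Prop) (k : ℕ) : Set V :=
  {v | EndPath R k v ∧ ∀ m : ℕ, k < m → ¬ EndPath R m v}

open Classical in
/-- The cut-rank `ρ_D(X)`: the `𝔽₂`-rank of the submatrix `A_D[X, V∖X]`
(rows indexed by `X`, columns outside `X`; entries at columns in `X` are set
to zero). -/
noncomputable def cutRank {V : Type*} [Fintype V] (R : V → V → Prop)
    (X : Set V) : ℕ :=
  Module.finrank (ZMod 2) ↥(Submodule.span (ZMod 2)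
    {f : V → ZMod 2 | ∃ u ∈ X, f = fun y => if y ∉ X ∧ R u y then 1 else 0})

open Classical in
/-- The `𝔽₂`-rank of the submatrix `A_D[X, Y]` (rows indexed by `X`, columns
by `Y`; entries at columns outside `Y` are set to zero). -/
noncomputable def subRank {V : Type*} [Fintype V] (R : V → V → Prop)
    (X Y : Set V) : ℕ :=
  Module.finrank (ZMod 2) ↥(Submodule.span (ZMod 2)
    {f : V → ZMod 2 | ∃ u ∈ X, f = fun y => if y ∈ Y ∧ R u y then 1 else 0})


/-!
Bott equivalence preserves the level function `level R x`, the length of a longest path ending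
at `x`: the arcs created by a local complementation or a slide still go from a lower to a higher
level (the two vertices of a slide have the same in-neighbours, hence the same level), and every
vertex of level `k + 1` keeps an in-neighbour of level `k`. So acyclicity and the partition into
levels survive every step.

Over `𝔽₂`, the local complementation at `v` changes `A[X, V ∖ X]` by adding row `v` to the rows
of the in-neighbours of `v` when `v ∈ X`, and column `v` to the columns of its out-neighbours
otherwise. A slide on `uv` adds row `u` to row `v`, and when `X` is a union of levels, `u` and `v`
are both in `X` or both outside it. All of these preserve rank. Between consecutive levels
`L_j` and `L_{j+1}` a local complementation changes nothing, since a path `x → v → y` climbs at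
least two levels.
-/

open Relation

section Paths

variable {V : Type*} {R : V → V → Prop}

noncomputable def level (R : V → V → Prop) (x : V) : ℕ := sSup {k | EndPath R k x}

lemma endPath_zero (R : V → V → Prop) (x : V) : EndPath R 0 x :=
  ⟨fun _ => x, fun a b _ => Fin.ext (by omega), rfl, fun i => i.elim0⟩

lemma reflTransGen_of_path {k : ℕ} {f : Fin (k + 1) → V}
    (hf : ∀ i : Fin k, R (f i.castSucc) (f i.succ)) (i : Fin (k + 1)) :
    ReflTransGen R (f i) (f (Fin.last k)) := by
  induction i using Fin.reverseInduction with
  | last => rfl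
  | cast i ih => exact .head (hf i) ih

lemma EndPath.succ_of_arc (hR : AcyclicRel R) {k : ℕ} {x y : V} (hx : EndPath R k x)
    (hxy : R x y) : EndPath R (k + 1) y := by
  obtain ⟨f, hinj, rfl, harc⟩ := hx
  have hy : y ∉ Set.range f := by
    rintro ⟨i, rfl⟩
    exact hR _ (.head' hxy (reflTransGen_of_path harc i))
  refine ⟨Fin.snoc f y, Fin.snoc_injective_of_injective hinj hy, Fin.snoc_last _ _,
    fun i => ?_⟩
  induction i using Fin.lastCases with
  | last => simpa using hxy
  | cast i => rw [Fin.succ_castSucc, Fin.snoc_castSucc, Fin.snoc_castSucc]; exact harc i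

lemma acyclicRel_of_forall_lt (m : V → ℕ) (h : ∀ a b, R a b → m a < m b) : AcyclicRel R :=
  fun v hv => lt_irrefl (m v) (by simpa [transGen_eq_self] using hv.lift m h)

lemma AcyclicRel.irrefl (hR : AcyclicRel R) (v : V) : ¬ R v v :=
  fun h => hR v (.single h)

end Paths

section Level

variable {V : Type*} [Fintype V] {R R' : V → V → Prop} {x y : V} {k : ℕ}

lemma EndPath.lt_card (h : EndPath R k x) : k < Fintype.card V := by
  obtain ⟨f, hf, -, -⟩ := h
  simpa using Fintype.card_le_of_injective f hf

lemma bddAbove_endPath (R : V → V → Prop) (x : V) : BddAbove {k | EndPath R k x} :=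
  ⟨Fintype.card V, fun _ h => h.lt_card.le⟩

lemma endPath_level (R : V → V → Prop) (x : V) : EndPath R (level R x) x :=
  Nat.sSup_mem ⟨0, endPath_zero R x⟩ (bddAbove_endPath R x)

lemma EndPath.le_level (h : EndPath R k x) : k ≤ level R x :=
  le_csSup (bddAbove_endPath R x) h

lemma levelSet_eq_preimage (R : V → V → Prop) (k : ℕ) : levelSet R k = level R ⁻¹' {k} := by
  ext x
  refine ⟨fun ⟨hk, hmax⟩ => ?_, fun hx => ⟨?_, fun m hm hp => ?_⟩⟩
  · by_contra hne
    exact hmax _ (lt_of_le_of_ne hk.le_level (Ne.symm hne)) (endPath_level R x)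
  · exact (hx : level R x = k) ▸ endPath_level R x
  · have := hp.le_level
    simp only [Set.mem_preimage, Set.mem_singleton_iff] at hx
    omega

lemma biUnion_levelSet (R : V → V → Prop) (J : Set ℕ) :
    ⋃ j ∈ J, levelSet R j = level R ⁻¹' J := by
  simp only [levelSet_eq_preimage, ← Set.preimage_iUnion₂, Set.biUnion_of_singleton]

lemma AcyclicRel.level_lt (hR : AcyclicRel R) (hxy : R x y) : level R x < level R y :=
  ((endPath_level R x).succ_of_arc hR hxy).le_level

lemma AcyclicRel.exists_arc_of_level_eq_succ (hR : AcyclicRel R) (hx : level R x = k + 1) :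
    ∃ y, R y x ∧ level R y = k := by
  obtain ⟨f, hinj, hlast, harc⟩ : EndPath R (k + 1) x := hx ▸ endPath_level R x
  have hy : EndPath R k (f (Fin.last k).castSucc) :=
    ⟨f ∘ Fin.castSucc, hinj.comp (Fin.castSucc_injective _), rfl,
      fun i => by simpa using harc i.castSucc⟩
  have hyx : R (f (Fin.last k).castSucc) x := by simpa [hlast] using harc (Fin.last k)
  have := hR.level_lt hyx
  exact ⟨_, hyx, le_antisymm (by omega) hy.le_level⟩

lemma level_eq_of_lt_of_exists_pred (m : V → ℕ) (hlt : ∀ a b, R a b → m a < m b)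
    (hpred : ∀ x k, m x = k + 1 → ∃ y, R y x ∧ m y = k) : level R = m := by
  have hR := acyclicRel_of_forall_lt m hlt
  suffices ∀ n x, m x = n → level R x = n from funext fun x => this _ x rfl
  intro n
  induction n using Nat.strong_induction_on with
  | _ n ih =>
    intro x hx
    have hle : level R x ≤ n := by
      rcases hl : level R x with _ | j
      · omega
      · obtain ⟨y, hyx, rfl⟩ := hR.exists_arc_of_level_eq_succ hl
        have hy := hlt y x hyx
        rw [ih (m y) (hx ▸ hy) y rfl]
        omega
    have hge : n ≤ level R x := by
      rcases n with _ | k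
      · omega
      · obtain ⟨y, hyx, hy⟩ := hpred x k hx
        have := hR.level_lt hyx
        rw [ih k (by omega) y hy] at this
        omega
    omega

lemma AcyclicRel.level_eq_of_same_inNeighbors (hR : AcyclicRel R) {u v : V}
    (hN : ∀ w, R w u ↔ R w v) : level R u = level R v := by
  have key : ∀ a b : V, (∀ w, R w a ↔ R w b) → level R a ≤ level R b := by
    intro a b hab
    rcases hk : level R a with _ | k
    · omega
    · obtain ⟨y, hy, rfl⟩ := hR.exists_arc_of_level_eq_succ hk
      exact hR.level_lt ((hab y).1 hy)
  exact le_antisymm (key u v hN) (key v u fun w => (hN w).symm)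

lemma AcyclicRel.level_lt_of_localComp (hR : AcyclicRel R) {v a b : V}
    (h : localComp R v a b) : level R a < level R b := by
  rcases h with ⟨hab, -⟩ | ⟨⟨hav, hvb⟩, -⟩
  · exact hR.level_lt hab
  · exact (hR.level_lt hav).trans (hR.level_lt hvb)

lemma AcyclicRel.level_lt_of_slideRel (hR : AcyclicRel R) {u v a b : V}
    (hN : ∀ w, R w u ↔ R w v) (h : slideRel R u v a b) : level R a < level R b := by
  rcases h with ⟨hab, -⟩ | ⟨⟨rfl, hub⟩, -⟩
  · exact hR.level_lt hab
  · exact hR.level_eq_of_same_inNeighbors hN ▸ hR.level_lt hub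

lemma AcyclicRel.level_localComp (hR : AcyclicRel R) (v : V) :
    level (localComp R v) = level R := by
  refine level_eq_of_lt_of_exists_pred _ (fun _ _ => hR.level_lt_of_localComp) fun x k hx => ?_
  obtain ⟨y, hyx, rfl⟩ := hR.exists_arc_of_level_eq_succ hx
  refine ⟨y, Or.inl ⟨hyx, fun ⟨hyv, hvx⟩ => ?_⟩, rfl⟩
  have := hR.level_lt hyv
  have := hR.level_lt hvx
  omega

lemma AcyclicRel.level_slideRel (hR : AcyclicRel R) {u v : V} (huv : u ≠ v)
    (hN : ∀ w, R w u ↔ R w v) : level (slideRel R u v) = level R := by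
  refine level_eq_of_lt_of_exists_pred _ (fun _ _ => hR.level_lt_of_slideRel hN) fun x k hx => ?_
  obtain ⟨y, hyx, rfl⟩ := hR.exists_arc_of_level_eq_succ hx
  by_cases hc : y = v ∧ R u x
  · obtain ⟨rfl, hux⟩ := hc
    exact ⟨u, Or.inl ⟨hux, fun h => huv h.1⟩, hR.level_eq_of_same_inNeighbors hN⟩
  · exact ⟨y, Or.inl ⟨hyx, hc⟩, rfl⟩

lemma GStep.level_eq (hR : AcyclicRel R) (h : GStep R R') : level R' = level R := by
  cases h with
  | lc v => exact hR.level_localComp v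
  | sl u v huv hN => exact hR.level_slideRel huv hN

lemma GStep.acyclicRel (hR : AcyclicRel R) (h : GStep R R') : AcyclicRel R' := by
  refine acyclicRel_of_forall_lt (level R) fun a b hab => ?_
  cases h with
  | lc v => exact hR.level_lt_of_localComp hab
  | sl u v _ hN => exact hR.level_lt_of_slideRel hN hab

lemma AcyclicRel.of_reflTransGen_gstep (hR : AcyclicRel R) (h : ReflTransGen GStep R R') :
    AcyclicRel R' ∧ level R' = level R := by
  induction h with
  | refl => exact ⟨hR, rfl⟩
  | tail _ hstep ih => exact ⟨hstep.acyclicRel ih.1, (hstep.level_eq ih.1).trans ih.2⟩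

end Level

lemma Submodule.span_image_eq_of_add_smul {K ι M : Type*} [Ring K] [AddCommGroup M]
    [Module K M] {X : Set ι} {g g' : ι → M} {c : M} (ε : ι → K)
    (hc : c ∈ span K (g '' X)) (hc' : c ∈ span K (g' '' X))
    (h : ∀ u ∈ X, g' u = g u + ε u • c) :
    span K (g' '' X) = span K (g '' X) := by
  apply le_antisymm <;> rw [span_le] <;> rintro _ ⟨u, hu, rfl⟩
  · rw [h u hu]
    exact add_mem (subset_span ⟨u, hu, rfl⟩) (smul_mem _ _ hc)
  · rw [eq_sub_of_add_eq (h u hu).symm]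
    exact sub_mem (subset_span ⟨u, hu, rfl⟩) (smul_mem _ _ hc')

lemma LinearEquiv.finrank_span_image {K M N : Type*} [Ring K] [AddCommGroup M] [Module K M]
    [AddCommGroup N] [Module K N] (e : M ≃ₗ[K] N) (s : Set M) :
    Module.finrank K (Submodule.span K (e '' s)) = Module.finrank K (Submodule.span K s) := by
  rw [← e.coe_toLinearMap, Submodule.span_image, e.finrank_map_eq]

section Rank

open Submodule Classical

variable {V : Type*} {R : V → V → Prop}

noncomputable def adjRow (R : V → V → Prop) (Y : Set V) (u : V) : V → ZMod 2 :=
  fun y => if y ∈ Y ∧ R u y then 1 else 0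

lemma localComp_apply (R : V → V → Prop) (v x y : V) :
    localComp R v x y = Xor (R x y) (R x v ∧ R v y) := rfl

lemma slideRel_apply (R : V → V → Prop) (u v x y : V) :
    slideRel R u v x y = Xor (R x y) (x = v ∧ R u y) := rfl

lemma adjRow_localComp (R : V → V → Prop) (Y : Set V) (v u : V) :
    adjRow (localComp R v) Y u =
      adjRow R Y u + (if R u v then (1 : ZMod 2) else 0) • adjRow R Y v := by
  funext y
  simp only [adjRow, localComp_apply, Pi.add_apply, Pi.smul_apply]
  by_cases hy : y ∈ Y <;> by_cases huy : R u y <;> by_cases huv : R u v <;>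
    by_cases hvy : R v y <;> simp [xor_def, hy, huy, huv, hvy, CharTwo.add_self_eq_zero]

lemma adjRow_slideRel (R : V → V → Prop) (Y : Set V) (u v x : V) :
    adjRow (slideRel R u v) Y x =
      adjRow R Y x + (if x = v then (1 : ZMod 2) else 0) • adjRow R Y u := by
  funext y
  simp only [adjRow, slideRel_apply, Pi.add_apply, Pi.smul_apply]
  by_cases hxv : x = v
  · subst hxv
    by_cases hy : y ∈ Y <;> by_cases hxy : R x y <;> by_cases huy : R u y <;>
      simp [xor_def, hy, hxy, huy, CharTwo.add_self_eq_zero]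
  · simp [xor_def, hxv]

variable [Fintype V]

lemma subRank_eq_finrank_span (R : V → V → Prop) (X Y : Set V) :
    subRank R X Y = Module.finrank (ZMod 2) (span (ZMod 2) (adjRow R Y '' X)) := by
  have : {f : V → ZMod 2 | ∃ u ∈ X, f = fun y => if y ∈ Y ∧ R u y then 1 else 0} =
      adjRow R Y '' X :=
    Set.ext fun _ => ⟨fun ⟨u, hu, h⟩ => ⟨u, hu, h.symm⟩, fun ⟨u, hu, h⟩ => ⟨u, hu, h.symm⟩⟩
  rw [subRank, this]

lemma cutRank_eq_subRank (R : V → V → Prop) (X : Set V) : cutRank R X = subRank R X Xᶜ := by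
  unfold cutRank subRank
  congr!

lemma subRank_congr {R' : V → V → Prop} {X Y : Set V}
    (h : ∀ x ∈ X, ∀ y ∈ Y, R x y ↔ R' x y) : subRank R X Y = subRank R' X Y := by
  have : adjRow R Y '' X = adjRow R' Y '' X :=
    Set.image_congr fun x hx => funext fun y =>
      if_congr (and_congr_right fun hy => h x hx y hy) rfl rfl
  rw [subRank_eq_finrank_span, subRank_eq_finrank_span, this]

lemma subRank_localComp_of_mem_left {v : V} (hv : ¬ R v v) {X : Set V} (hvX : v ∈ X)
    (Y : Set V) : subRank (localComp R v) X Y = subRank R X Y := by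
  have hrow_v : adjRow (localComp R v) Y v = adjRow R Y v := by simp [adjRow_localComp, hv]
  simp only [subRank_eq_finrank_span]
  rw [span_image_eq_of_add_smul (g := adjRow R Y) (c := adjRow R Y v)
    (fun u => if R u v then 1 else 0) (subset_span ⟨v, hvX, rfl⟩)
    (hrow_v ▸ subset_span ⟨v, hvX, rfl⟩)
    fun u _ => adjRow_localComp R Y v u]

lemma subRank_localComp_of_mem_right {v : V} (hv : ¬ R v v) {Y : Set V} (hvY : v ∈ Y)
    (X : Set V) : subRank (localComp R v) X Y = subRank R X Y := by
  have hvv : LinearMap.proj (R := ZMod 2) v (adjRow R Y v) = 0 := by simp [adjRow, hv]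
  have hcol (u : V) :
      adjRow (localComp R v) Y u = LinearEquiv.transvection hvv (adjRow R Y u) := by
    rw [adjRow_localComp, LinearEquiv.transvection.apply]
    simp [adjRow, hvY]
  simp only [subRank_eq_finrank_span]
  rw [Set.image_congr fun u _ => hcol u, ← Set.image_image, LinearEquiv.finrank_span_image]

lemma subRank_localComp_compl {v : V} (hv : ¬ R v v) (X : Set V) :
    subRank (localComp R v) X Xᶜ = subRank R X Xᶜ := by
  by_cases hvX : v ∈ X
  · exact subRank_localComp_of_mem_left hv hvX Xᶜ
  · exact subRank_localComp_of_mem_right hv hvX X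

lemma subRank_slideRel {u v : V} (huv : u ≠ v) {X : Set V} (hX : v ∈ X → u ∈ X)
    (Y : Set V) : subRank (slideRel R u v) X Y = subRank R X Y := by
  by_cases hvX : v ∈ X
  · have hrow_u : adjRow (slideRel R u v) Y u = adjRow R Y u := by simp [adjRow_slideRel, huv]
    simp only [subRank_eq_finrank_span]
    rw [span_image_eq_of_add_smul (g := adjRow R Y) (c := adjRow R Y u)
      (fun x => if x = v then 1 else 0) (subset_span ⟨u, hX hvX, rfl⟩)
      (hrow_u ▸ subset_span ⟨u, hX hvX, rfl⟩)
      fun x _ => adjRow_slideRel R Y u v x]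
  · refine subRank_congr fun x hx y _ => ?_
    simp [slideRel_apply, xor_def, ne_of_mem_of_not_mem hx hvX]

end Rank

section Invariance

variable {V : Type*} [Fintype V] {R R' : V → V → Prop}

lemma AcyclicRel.subRank_localComp_level_succ (hR : AcyclicRel R) (v : V) (j : ℕ) :
    subRank (localComp R v) (level R ⁻¹' {j}) (level R ⁻¹' {j + 1}) =
      subRank R (level R ⁻¹' {j}) (level R ⁻¹' {j + 1}) := by
  refine subRank_congr fun x hx y hy => ?_
  simp only [Set.mem_preimage, Set.mem_singleton_iff] at hx hy
  have hno_path : ¬ (R x v ∧ R v y) := fun ⟨hxv, hvy⟩ => by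
    have := hR.level_lt hxv
    have := hR.level_lt hvy
    omega
  simp [localComp_apply, xor_def, hno_path]

lemma GStep.cutRank_preimage_level (hR : AcyclicRel R) (h : GStep R R') (J : Set ℕ) :
    cutRank R' (level R ⁻¹' J) = cutRank R (level R ⁻¹' J) := by
  rw [cutRank_eq_subRank, cutRank_eq_subRank]
  cases h with
  | lc v => exact subRank_localComp_compl (hR.irrefl v) _
  | sl u v huv hN =>
    exact subRank_slideRel huv (by simp [hR.level_eq_of_same_inNeighbors hN]) _

lemma GStep.subRank_level_succ (hR : AcyclicRel R) (h : GStep R R') (j : ℕ) :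
    subRank R' (level R ⁻¹' {j}) (level R ⁻¹' {j + 1}) =
      subRank R (level R ⁻¹' {j}) (level R ⁻¹' {j + 1}) := by
  cases h with
  | lc v => exact hR.subRank_localComp_level_succ v j
  | sl u v huv hN =>
    exact subRank_slideRel huv (by simp [hR.level_eq_of_same_inNeighbors hN]) _

lemma AcyclicRel.apply_eq_of_reflTransGen_gstep {α : Sort*} (F : (V → V → Prop) → α)
    (hF : ∀ S S', AcyclicRel S → level S = level R → GStep S S' → F S' = F S)
    (hR : AcyclicRel R) (h : ReflTransGen GStep R R') : F R' = F R := by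
  induction h with
  | refl => rfl
  | tail hRS hstep ih =>
    obtain ⟨hS, hlevel⟩ := hR.of_reflTransGen_gstep hRS
    exact (hF _ _ hS hlevel hstep).trans ih

lemma AcyclicRel.cutRank_preimage_level_of_reflTransGen (hR : AcyclicRel R)
    (h : ReflTransGen GStep R R') (J : Set ℕ) :
    cutRank R' (level R ⁻¹' J) = cutRank R (level R ⁻¹' J) :=
  hR.apply_eq_of_reflTransGen_gstep (fun S => cutRank S (level R ⁻¹' J))
    (fun _ _ hS hlevel hstep => hlevel ▸ hstep.cutRank_preimage_level hS J) h

lemma AcyclicRel.subRank_level_succ_of_reflTransGen (hR : AcyclicRel R)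
    (h : ReflTransGen GStep R R') (j : ℕ) :
    subRank R' (level R ⁻¹' {j}) (level R ⁻¹' {j + 1}) =
      subRank R (level R ⁻¹' {j}) (level R ⁻¹' {j + 1}) :=
  hR.apply_eq_of_reflTransGen_gstep
    (fun S => subRank S (level R ⁻¹' {j}) (level R ⁻¹' {j + 1}))
    (fun _ _ hS hlevel hstep => hlevel ▸ hstep.subRank_level_succ hS j) h

end Invariance

section Isomorphism

variable {V W : Type*} {R : V → V → Prop} {S : W → W → Prop}

lemma endPath_equiv_iff (e : V ≃ W) (he : ∀ a b, R a b ↔ S (e a) (e b)) (k : ℕ) (x : V) :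
    EndPath S k (e x) ↔ EndPath R k x := by
  constructor
  · rintro ⟨g, hinj, hlast, harc⟩
    exact ⟨e.symm ∘ g, e.symm.injective.comp hinj, by simp [hlast],
      fun i => by simpa [he] using harc i⟩
  · rintro ⟨f, hinj, rfl, harc⟩
    exact ⟨e ∘ f, e.injective.comp hinj, rfl, fun i => (he _ _).1 (harc i)⟩

lemma levelSet_equiv (e : V ≃ W) (he : ∀ a b, R a b ↔ S (e a) (e b)) (k : ℕ) :
    levelSet S k = e '' levelSet R k := by
  ext w
  obtain ⟨x, rfl⟩ := e.surjective w
  simp [levelSet, endPath_equiv_iff e he]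

lemma subRank_image_equiv [Fintype V] [Fintype W] (e : V ≃ W)
    (he : ∀ a b, R a b ↔ S (e a) (e b)) (X Y : Set V) :
    subRank S (e '' X) (e '' Y) = subRank R X Y := by
  have hrow (x : V) : adjRow S (e '' Y) (e x) =
      LinearEquiv.funCongrLeft (ZMod 2) (ZMod 2) e.symm (adjRow R Y x) := by
    funext w
    obtain ⟨y, rfl⟩ := e.surjective w
    classical
    simp only [adjRow, LinearEquiv.funCongrLeft_apply]
    exact if_congr (by simp [he]) rfl rfl
  rw [subRank_eq_finrank_span, subRank_eq_finrank_span, Set.image_image,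
    Set.image_congr fun x _ => hrow x, ← Set.image_image, LinearEquiv.finrank_span_image]

lemma cutRank_image_equiv [Fintype V] [Fintype W] (e : V ≃ W)
    (he : ∀ a b, R a b ↔ S (e a) (e b)) (X : Set V) :
    cutRank S (e '' X) = cutRank R X := by
  rw [cutRank_eq_subRank, cutRank_eq_subRank, ← Set.image_compl_eq e.bijective,
    subRank_image_equiv e he]

end Isomorphism

theorem cutRank_invariant_general {V W : Type*} [Fintype V] [Fintype W] (n : ℕ)
    (R : V → V → Prop) (S : W → W → Prop)
    (hR : AcyclicRel R) (h : BottEquivD R S) :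
    (∀ J : Set ℕ, J ⊆ Set.Iio n →
      cutRank R (⋃ j ∈ J, levelSet R j) = cutRank S (⋃ j ∈ J, levelSet S j)) ∧
    (∀ j : ℕ, j + 1 < n →
      subRank R (levelSet R j) (levelSet R (j + 1)) =
        subRank S (levelSet S j) (levelSet S (j + 1))) := by
  obtain ⟨R', hRR', e, he⟩ := h
  have hlevel : level R' = level R := (hR.of_reflTransGen_gstep hRR').2
  refine ⟨fun J _ => ?_, fun j _ => ?_⟩
  · simp only [levelSet_equiv e he, ← Set.image_iUnion₂]
    rw [cutRank_image_equiv e he, biUnion_levelSet, biUnion_levelSet, hlevel,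
      hR.cutRank_preimage_level_of_reflTransGen hRR']
  · rw [levelSet_equiv e he, levelSet_equiv e he, subRank_image_equiv e he,
      levelSet_eq_preimage, levelSet_eq_preimage, levelSet_eq_preimage, levelSet_eq_preimage,
      hlevel, hR.subRank_level_succ_of_reflTransGen hRR']

/-- For Bott equivalent acyclic digraphs on `n` vertices: (i) the cut-rank of
any union of level sets (indexed by `J ⊆ {0,…,n−1}`) is invariant, and
(ii) the `𝔽₂`-rank of `A_D[L_j, L_{j+1}]` is invariant for every
`j ∈ {0,…,n−2}`. -/
theorem cutRank_invariant {V W : Type*} [Fintype V] [Fintype W] (n : ℕ)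
    (hV : Fintype.card V = n) (hW : Fintype.card W = n)
    (R : V → V → Prop) (S : W → W → Prop)
    (hR : AcyclicRel R) (hS : AcyclicRel S) (h : BottEquivD R S) :
    (∀ J : Set ℕ, J ⊆ Set.Iio n →
      cutRank R (⋃ j ∈ J, levelSet R j) = cutRank S (⋃ j ∈ J, levelSet S j)) ∧
    (∀ j : ℕ, j + 1 < n →
      subRank R (levelSet R j) (levelSet R (j + 1)) =
        subRank S (levelSet S j) (levelSet S (j + 1))) :=
  cutRank_invariant_general n R S hR h
end
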